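/- arXiv:1602.02234 — 3 statements merged into one kernel-verified Lean document; each statement's English description precedes it below -/
import Mathlib

section
/- (Auslander–Bridger Lemma) Let 𝒜 be an abelian category with enough projectives and 𝒳 a resolving subcategory of 𝒜. Given two exact sequences 0 → X_n → X_{n-1} → ⋯ → X_0 → Z → 0 and 0 → Y_n → Y_{n-1} → ⋯ → Y_0 → Z → 0 with X_i ∈ 𝒳 and Y_i ∈ 𝒳 for 0 ≤ i ≤ n−1, then X_n ∈ 𝒳 if and only if Y_n ∈ 𝒳. -/
/-!
Both sequences are compared with a projective resolution `0 → Ω → P_{n-1} → ⋯ → P_0 → Z → 0`.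
By induction on `n` one shows more generally: if `0 → Z' → Z → X → 0` is exact with `X ∈ 𝒳`,
`K` is the `n`-th syzygy of `Z` in an `𝒳`-resolution and `Ω` the `n`-th syzygy of `Z'` in a
projective resolution, then `K ∈ 𝒳 ↔ Ω ∈ 𝒳`; the case `n = 0` is closure under extensions and
kernels of epimorphisms. In the inductive step, let `X₀ ↠ Z` and `P₀ ↠ Z'` be the first steps,
with kernels `K₁` and `Ω₁`. Pulling `X₀ ↠ Z` back along `Z' ↪ Z` gives `M ↠ Z'`, still with
kernel `K₁`, where `M ∈ 𝒳` as the kernel of `X₀ ↠ X`. The pullback of `M ↠ Z'` and `P₀ ↠ Z'`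
is then an extension `0 → Ω₁ → K₁ ⊞ P₀ → M → 0` (Schanuel), and adding `P₀` to the first
step of the resolution of `K₁` leaves the `(n-1)`-st syzygy unchanged for `n ≥ 2` and replaces
it by `K₁ ⊞ P₀` for `n = 1`, which lies in `𝒳` iff `K₁` does.
-/

open CategoryTheory CategoryTheory.Limits
open scoped ZeroObject

/-- A full subcategory (given by a predicate on objects, closed under isomorphisms)
of an abelian category with enough projectives is *resolving* if it contains all projective
objects, and is closed under extensions, direct summands and kernels of epimorphisms. -/
def IsResolving {C : Type*} [Category C] [Abelian C] (P : C → Prop) : Prop :=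
  (∀ X Y : C, (X ≅ Y) → P X → P Y) ∧
  (∀ X : C, Projective X → P X) ∧
  (∀ S : ShortComplex C, S.ShortExact → P S.X₁ → P S.X₃ → P S.X₂) ∧
  (∀ X Y : C, P (X ⊞ Y) → P X) ∧
  (∀ S : ShortComplex C, S.ShortExact → P S.X₂ → P S.X₃ → P S.X₁)

section AuslanderBridger

variable {𝒜 : Type*} [Category 𝒜] [Abelian 𝒜]

namespace CategoryTheory.ShortComplex

lemma shortExact_kernelSequence {X Y : 𝒜} (f : X ⟶ Y) [Epi f] :
    (kernelSequence f).ShortExact where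
  exact := kernelSequence_exact f
  epi_g := ‹Epi f›

lemma Exact.shortExact_kernel_lift {S : ShortComplex 𝒜} (hS : S.Exact) :
    (ShortComplex.mk (kernel.ι S.f) (kernel.lift S.g S.f S.zero)
      (by simp [← cancel_mono (kernel.ι S.g)])).ShortExact where
  exact := exact_of_f_is_kernel _
    (isKernelOfComp _ _ (kernelIsKernel S.f) _ (kernel.lift_ι _ _ _))
  epi_g := (exact_iff_epi_kernel_lift S).1 hS

lemma ShortExact.exists_epi_kernel_iso {S : ShortComplex 𝒜} (hS : S.ShortExact) {M : 𝒜}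
    (g : M ⟶ S.X₂) [Epi g] :
    ∃ e : kernel (g ≫ S.g) ⟶ S.X₁, Epi e ∧ Nonempty (kernel e ≅ kernel g) := by
  have := hS.mono_f
  let e := hS.exact.lift (kernel.ι (g ≫ S.g) ≫ g) (by simp)
  have he : e ≫ S.f = kernel.ι (g ≫ S.g) ≫ g := hS.exact.lift_f _ _
  have sq : IsPullback (kernel.ι (g ≫ S.g)) e g S.f :=
    IsPullback.of_isLimit (PullbackCone.IsLimit.mk he.symm
      (fun s => kernel.lift _ s.fst (by simp [s.condition_assoc])) (fun s => by simp)
      (fun s => by simp [← cancel_mono S.f, he, s.condition]) (fun s m h₁ _ => by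
        simp [← cancel_mono (kernel.ι (g ≫ S.g)), ← h₁]))
  have := isIso_kernel_map_of_isPullback sq.flip
  exact ⟨e, Abelian.epi_snd_of_isLimit _ _ sq.isLimit, ⟨asIso (kernel.map _ _ _ _ sq.flip.w)⟩⟩

end CategoryTheory.ShortComplex

/-- Schanuel's lemma: `E` is the pullback of `e` and `q`. -/
lemma exists_epi_kernel_iso_of_projective {M P Z : 𝒜} (e : M ⟶ Z) (q : P ⟶ Z) [Epi e] [Epi q]
    [Projective P] : ∃ (E : 𝒜) (p : E ⟶ M), Epi p ∧ Nonempty (kernel p ≅ kernel q) ∧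
      Nonempty (E ≅ kernel e ⊞ P) := by
  have sq := IsPullback.of_hasPullback e q
  have := isIso_kernel_map_of_isPullback sq
  have := isIso_kernel_map_of_isPullback sq.flip
  have : Projective (ShortComplex.kernelSequence (pullback.snd e q)).X₃ := ‹Projective P›
  have hsplit := (ShortComplex.shortExact_kernelSequence (pullback.snd e q)).splittingOfProjective
  exact ⟨pullback e q, pullback.fst e q, inferInstance, ⟨asIso (kernel.map _ _ _ _ sq.w)⟩,
    ⟨hsplit.isoBinaryBiproduct ≪≫ biprod.mapIso (asIso (kernel.map _ _ _ _ sq.flip.w) :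
      kernel (pullback.snd e q) ≅ kernel e) (Iso.refl _)⟩⟩

lemma isPullback_biprod_map_id_fst {X Y : 𝒜} (f : X ⟶ Y) (Q : 𝒜) :
    IsPullback (biprod.map f (𝟙 Q)) biprod.fst biprod.fst f :=
  IsPullback.of_isLimit (PullbackCone.IsLimit.mk (biprod.map_fst _ _)
    (fun s => biprod.lift s.snd (s.fst ≫ biprod.snd))
    (fun s => by apply biprod.hom_ext <;> simp [s.condition]) (fun s => by simp)
    (fun s m h₁ h₂ => by
      apply biprod.hom_ext
      · simpa using h₂
      · simpa using h₁ =≫ biprod.snd))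

namespace IsResolving

variable {𝒳 : 𝒜 → Prop}

lemma prop_iff_of_iso (h𝒳 : IsResolving 𝒳) {X Y : 𝒜} (e : X ≅ Y) : 𝒳 X ↔ 𝒳 Y :=
  ⟨h𝒳.1 X Y e, h𝒳.1 Y X e.symm⟩

lemma prop_of_projective (h𝒳 : IsResolving 𝒳) (X : 𝒜) [Projective X] : 𝒳 X :=
  h𝒳.2.1 X ‹_›

lemma prop_X₂_of_shortExact (h𝒳 : IsResolving 𝒳) {S : ShortComplex 𝒜} (hS : S.ShortExact)
    (h₁ : 𝒳 S.X₁) (h₃ : 𝒳 S.X₃) : 𝒳 S.X₂ :=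
  h𝒳.2.2.1 S hS h₁ h₃

lemma prop_X₁_of_shortExact (h𝒳 : IsResolving 𝒳) {S : ShortComplex 𝒜} (hS : S.ShortExact)
    (h₂ : 𝒳 S.X₂) (h₃ : 𝒳 S.X₃) : 𝒳 S.X₁ :=
  h𝒳.2.2.2.2 S hS h₂ h₃

lemma prop_X₁_iff_prop_X₂ (h𝒳 : IsResolving 𝒳) {S : ShortComplex 𝒜} (hS : S.ShortExact)
    (h₃ : 𝒳 S.X₃) : 𝒳 S.X₁ ↔ 𝒳 S.X₂ :=
  ⟨(h𝒳.prop_X₂_of_shortExact hS · h₃), (h𝒳.prop_X₁_of_shortExact hS · h₃)⟩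

lemma prop_kernel (h𝒳 : IsResolving 𝒳) {X Y : 𝒜} (f : X ⟶ Y) [Epi f] (hX : 𝒳 X) (hY : 𝒳 Y) :
    𝒳 (kernel f) :=
  h𝒳.prop_X₁_of_shortExact (ShortComplex.shortExact_kernelSequence f) hX hY

lemma prop_biprod_iff (h𝒳 : IsResolving 𝒳) {X Y : 𝒜} (hY : 𝒳 Y) : 𝒳 (X ⊞ Y) ↔ 𝒳 X :=
  ⟨h𝒳.2.2.2.1 X Y,
    (h𝒳.prop_X₂_of_shortExact (ShortComplex.Splitting.ofHasBinaryBiproduct X Y).shortExact · hY)⟩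

end IsResolving

/-- `IsSyzygy P n K Z`: there is an exact sequence `0 → K → M_{n-1} → ⋯ → M_0 → Z → 0`
with every `M_i` satisfying `P`. -/
def IsSyzygy (P : 𝒜 → Prop) : ℕ → 𝒜 → 𝒜 → Prop
  | 0, K, Z => Nonempty (K ≅ Z)
  | n + 1, K, Z => ∃ (M : 𝒜) (f : M ⟶ Z), P M ∧ Epi f ∧ IsSyzygy P n K (kernel f)

namespace IsSyzygy

variable {P : 𝒜 → Prop} {n : ℕ}

lemma of_iso_left {K K' Z : 𝒜} (h : IsSyzygy P n K Z) (e : K ≅ K') : IsSyzygy P n K' Z := by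
  induction n generalizing Z with
  | zero => exact ⟨e.symm ≪≫ h.some⟩
  | succ n ih =>
    obtain ⟨M, f, hM, hf, h⟩ := h
    exact ⟨M, f, hM, hf, ih h⟩

lemma of_iso_right {K Z Z' : 𝒜} (h : IsSyzygy P n K Z) (e : Z ≅ Z') : IsSyzygy P n K Z' := by
  induction n generalizing Z Z' with
  | zero => exact ⟨h.some ≪≫ e⟩
  | succ n ih =>
    obtain ⟨M, f, hM, hf, h⟩ := h
    exact ⟨M, f ≫ e.hom, hM, epi_comp _ _, ih h (kernelCompMono f e.hom).symm⟩

lemma succ_of_shortExact {K : 𝒜} {S : ShortComplex 𝒜} (hS : S.ShortExact) (h₂ : P S.X₂)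
    (h : IsSyzygy P n K S.X₁) : IsSyzygy P (n + 1) K S.X₃ :=
  have := hS.mono_f
  ⟨S.X₂, S.g, h₂, hS.epi_g,
    h.of_iso_right (IsLimit.conePointUniqueUpToIso hS.fIsKernel (limit.isLimit _))⟩

lemma exists_projective [EnoughProjectives 𝒜] (n : ℕ) (Z : 𝒜) :
    ∃ Ω, IsSyzygy Projective n Ω Z := by
  induction n generalizing Z with
  | zero => exact ⟨Z, ⟨Iso.refl Z⟩⟩
  | succ n ih =>
    obtain ⟨Ω, h⟩ := ih (kernel (Projective.π Z))
    exact ⟨Ω, Projective.over Z, Projective.π Z, inferInstance, inferInstance, h⟩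

lemma exists_biprod {𝒳 : 𝒜 → Prop} (h𝒳 : IsResolving 𝒳) {K Z Q : 𝒜}
    (h : IsSyzygy 𝒳 n K Z) (hQ : 𝒳 Q) : ∃ K', IsSyzygy 𝒳 n K' (Z ⊞ Q) ∧ (𝒳 K ↔ 𝒳 K') := by
  cases n with
  | zero =>
    exact ⟨Z ⊞ Q, ⟨Iso.refl _⟩,
      (h𝒳.prop_iff_of_iso h.some).trans (h𝒳.prop_biprod_iff hQ).symm⟩
  | succ n =>
    obtain ⟨M, f, hM, hf, h⟩ := h
    have := isIso_kernel_map_of_isPullback (isPullback_biprod_map_id_fst f Q)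
    exact ⟨K, ⟨M ⊞ Q, biprod.map f (𝟙 Q), (h𝒳.prop_biprod_iff hQ).2 hM, inferInstance,
      h.of_iso_right (asIso (kernel.map _ _ _ _ (biprod.map_fst f (𝟙 Q)))).symm⟩, Iff.rfl⟩

end IsSyzygy

lemma CategoryTheory.ComposableArrows.Exact.isSyzygy {P : 𝒜 → Prop} {n : ℕ}
    {S : ComposableArrows 𝒜 (n + 3)} (hS : S.Exact)
    (h₀ : IsZero (S.obj' 0)) (hlast : IsZero (S.obj' (n + 3)))
    (hP : ∀ (j : ℕ) (_ : 2 ≤ j) (_ : j ≤ n + 1), P (S.obj' j)) :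
    IsSyzygy P n (S.obj' 1) (S.obj' (n + 2)) := by
  have hker : ∀ m (_ : m ≤ n),
      IsSyzygy P m (kernel (S.map' 2 3)) (kernel (S.map' (m + 2) (m + 3))) := by
    intro m hm
    induction m with
    | zero => exact ⟨Iso.refl _⟩
    | succ m ih =>
      exact IsSyzygy.succ_of_shortExact (hS.exact' (m + 2) (m + 3) (m + 4)).shortExact_kernel_lift
        (hP (m + 2) (by omega) (by omega)) (ih (by omega))
  have := (hS.exact' 0 1 2).mono_g (h₀.eq_of_src _ _)
  have e₁ : S.obj' 1 ≅ kernel (S.map' 2 3) :=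
    IsLimit.conePointUniqueUpToIso (hS.exact' 1 2 3).fIsKernel (limit.isLimit _)
  have e₂ : kernel (S.map' (n + 2) (n + 3)) ≅ S.obj' (n + 2) :=
    kernelIsoOfEq (hlast.eq_of_tgt _ _) ≪≫ kernelZeroIsoSource
  exact ((hker n le_rfl).of_iso_left e₁.symm).of_iso_right e₂

namespace IsResolving

variable {𝒳 : 𝒜 → Prop}

theorem prop_iff_of_isSyzygy_of_shortExact (h𝒳 : IsResolving 𝒳) {n : ℕ} :
    ∀ {S : ShortComplex 𝒜} (_ : S.ShortExact) (_ : 𝒳 S.X₃) {K Ω : 𝒜}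
      (_ : IsSyzygy 𝒳 n K S.X₂) (_ : IsSyzygy Projective n Ω S.X₁), 𝒳 K ↔ 𝒳 Ω := by
  induction n with
  | zero =>
    rintro S hS h₃ K Ω ⟨eK⟩ ⟨eΩ⟩
    rw [h𝒳.prop_iff_of_iso eK, h𝒳.prop_iff_of_iso eΩ, h𝒳.prop_X₁_iff_prop_X₂ hS h₃]
  | succ n ih =>
    rintro S hS h₃ K Ω ⟨X₀, g, hX₀, hg, hK⟩ ⟨P₀, q, hP₀, hq, hΩ⟩
    obtain ⟨e, he, ⟨eK⟩⟩ := hS.exists_epi_kernel_iso g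
    obtain ⟨E, p, hp, ⟨eΩ⟩, ⟨eE⟩⟩ := exists_epi_kernel_iso_of_projective e q
    obtain ⟨K', hK', hKK'⟩ :=
      (hK.of_iso_right eK.symm).exists_biprod h𝒳 (h𝒳.prop_of_projective P₀)
    have := hS.epi_g
    have hM : 𝒳 (kernel (g ≫ S.g)) := h𝒳.prop_kernel (g ≫ S.g) hX₀ h₃
    exact hKK'.trans (ih (ShortComplex.shortExact_kernelSequence p) hM
      (hK'.of_iso_right eE.symm) (hΩ.of_iso_right eΩ.symm))

theorem prop_iff_of_isSyzygy [EnoughProjectives 𝒜] (h𝒳 : IsResolving 𝒳) {n : ℕ} {K L Z : 𝒜}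
    (hK : IsSyzygy 𝒳 n K Z) (hL : IsSyzygy 𝒳 n L Z) : 𝒳 K ↔ 𝒳 L := by
  obtain ⟨Ω, hΩ⟩ := IsSyzygy.exists_projective n (kernel (0 : Z ⟶ 0))
  have hS := ShortComplex.shortExact_kernelSequence (0 : Z ⟶ 0)
  have h₀ : 𝒳 (0 : 𝒜) := h𝒳.prop_of_projective 0
  exact (h𝒳.prop_iff_of_isSyzygy_of_shortExact hS h₀ hK hΩ).trans
    (h𝒳.prop_iff_of_isSyzygy_of_shortExact hS h₀ hL hΩ).symm

end IsResolving

end AuslanderBridger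

/-- In `S`, the object `X_i` is `S.obj ⟨n + 1 - i⟩` and `Z` is `S.obj ⟨n + 2⟩`; the zero objects
at both ends encode exactness at `X_n` and at `Z`. -/
theorem stmt_1 {𝒜 : Type*} [Category 𝒜] [Abelian 𝒜] [EnoughProjectives 𝒜]
    (𝒳 : 𝒜 → Prop) (h𝒳 : IsResolving 𝒳) (n : ℕ)
    (S T : ComposableArrows 𝒜 (n + 3))
    (hS : S.Exact) (hT : T.Exact)
    (hS0 : IsZero (S.obj ⟨0, by omega⟩)) (hSlast : IsZero (S.obj ⟨n + 3, by omega⟩))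
    (hT0 : IsZero (T.obj ⟨0, by omega⟩)) (hTlast : IsZero (T.obj ⟨n + 3, by omega⟩))
    (e : S.obj ⟨n + 2, by omega⟩ ≅ T.obj ⟨n + 2, by omega⟩)
    (hSX : ∀ (j : ℕ) (_ : 2 ≤ j) (_ : j ≤ n + 1), 𝒳 (S.obj ⟨j, by omega⟩))
    (hTX : ∀ (j : ℕ) (_ : 2 ≤ j) (_ : j ≤ n + 1), 𝒳 (T.obj ⟨j, by omega⟩)) :
    𝒳 (S.obj ⟨1, by omega⟩) ↔ 𝒳 (T.obj ⟨1, by omega⟩) :=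
  h𝒳.prop_iff_of_isSyzygy ((hS.isSyzygy hS0 hSlast hSX).of_iso_right e)
    (hT.isSyzygy hT0 hTlast hTX)
end

section
/- Let 𝒞 be a full additive subcategory of an abelian category 𝒜. For * ∈ {b, −, blank}, the full subcategory K^*_{𝒞ac}(𝒜) of the homotopy category K^*(𝒜) consisting of 𝒞-acyclic complexes equals the left orthogonal ^⊥𝒞 = {X• ∈ K^*(𝒜) : Hom_{K^*(𝒜)}(C, X•[n]) = 0 for all n ∈ ℤ and all C ∈ 𝒞}; in particular it is a thick triangulated subcategory of K^*(𝒜). -/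
open CategoryTheory CategoryTheory.Limits CategoryTheory.Pretriangulated

universe v u

variable {𝒜 : Type u} [Category.{v} 𝒜] [Abelian 𝒜]

/-- A cochain complex `X•` over `𝒜` is `𝒞`-acyclic if the complex of abelian groups
`Hom_𝒜(C, X•)` is acyclic for every object `C ∈ 𝒞`. -/
def CAcyclic (𝒞 : 𝒜 → Prop) (X : CochainComplex 𝒜 ℤ) : Prop :=
  ∀ (C : 𝒜), 𝒞 C → ∀ n : ℤ,
    (((preadditiveCoyoneda.obj (Opposite.op C)).mapHomologicalComplex
      (ComplexShape.up ℤ)).obj X).ExactAt n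

/-!
A morphism `C[0] ⟶ X[n]` in `K(𝒜)` is the class of a degree-`n` cocycle of the Hom complex,
i.e. of some `f : C ⟶ Xⁿ` with `f ≫ d = 0`, and it vanishes exactly when `f` lifts along
`d : Xⁿ⁻¹ ⟶ Xⁿ`. So `Hom(C[0], X[n]) = 0` for all `n` says that `Hom_𝒜(C, X•)` is acyclic.
The paper's left orthogonal `^⊥𝒞` is Mathlib's `rightOrthogonal` of the shift-closed family of
stalk complexes `C[n]`, and such an orthogonal is triangulated and closed under retracts.
-/

namespace CategoryTheory

section

variable {C : Type*} [Category C] [HasZeroMorphisms C]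

lemma Iso.forall_eq_zero_iff_of_target {X Y Y' : C} (e : Y ≅ Y') :
    (∀ f : X ⟶ Y, f = 0) ↔ ∀ f : X ⟶ Y', f = 0 :=
  ⟨fun h f => by simpa using congrArg (· ≫ e.hom) (h (f ≫ e.inv)),
    fun h f => by simpa using congrArg (· ≫ e.inv) (h (f ≫ e.hom))⟩

lemma Iso.forall_eq_zero_iff_of_source {X X' Y : C} (e : X ≅ X') :
    (∀ f : X ⟶ Y, f = 0) ↔ ∀ f : X' ⟶ Y, f = 0 :=
  ⟨fun h f => by simpa using congrArg (e.inv ≫ ·) (h (e.hom ≫ f)),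
    fun h f => by simpa using congrArg (e.hom ≫ ·) (h (e.inv ≫ f))⟩

namespace ObjectProperty

instance (P : ObjectProperty C) : P.rightOrthogonal.IsStableUnderRetracts where
  of_retract r hY _ f hX := by simpa using congrArg (· ≫ r.r) (hY (f ≫ r.i) hX)

lemma rightOrthogonal_shiftClosure_iff {A : Type*} [AddGroup A] [HasShift C A]
    (P : ObjectProperty C) (X : C) :
    (P.shiftClosure A).rightOrthogonal X ↔ ∀ Y, P Y → ∀ (a : A) (f : Y ⟶ X⟦a⟧), f = 0 := by
  refine ⟨fun hX Y hY a f => (P.shiftClosure A).rightOrthogonal.le_shift a X hX f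
    (P.le_shiftClosure Y hY), ?_⟩
  rintro hX Y' f ⟨Y, a, e, hY⟩
  revert f
  rw [e.forall_eq_zero_iff_of_source]
  intro f
  apply (shiftFunctor C (-a)).map_injective
  let ε := (shiftFunctorCompIsoId C a (-a) (add_neg_cancel a)).app Y
  simpa [← cancel_epi ε.inv] using hX Y hY (-a) (ε.inv ≫ f⟦-a⟧')

end ObjectProperty

end

end CategoryTheory

namespace CochainComplex

open HomComplex

variable {C : Type*} [Category C] [Preadditive C]

lemma exactAt_mapHomologicalComplex_coyoneda_iff (X : C) (K : CochainComplex C ℤ) (q : ℤ) :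
    (((preadditiveCoyoneda.obj (Opposite.op X)).mapHomologicalComplex
      (ComplexShape.up ℤ)).obj K).ExactAt q ↔
      ∀ f : X ⟶ K.X q, f ≫ K.d q (q + 1) = 0 →
        ∃ g : X ⟶ K.X (q - 1), g ≫ K.d (q - 1) q = f := by
  rw [HomologicalComplex.exactAt_iff' _ (q - 1) q (q + 1) (by simp) (by simp),
    ShortComplex.ab_exact_iff]
  rfl

lemma forall_quotient_single_hom_shift_eq_zero_iff [HasZeroObject C] (X : C)
    (K : CochainComplex C ℤ) {p n q : ℤ} (h : p + n = q) :
    (∀ φ : (HomotopyCategory.quotient C _).obj ((singleFunctor C p).obj X) ⟶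
        (HomotopyCategory.quotient C _).obj (K⟦n⟧), φ = 0) ↔
      ∀ f : X ⟶ K.X q, f ≫ K.d q (q + 1) = 0 →
        ∃ g : X ⟶ K.X (q - 1), g ≫ K.d (q - 1) q = f := by
  constructor
  · intro H f hf
    rw [← Cocycle.fromSingleMk_mem_coboundaries_iff f h (q + 1) rfl hf (q - 1) (by omega),
      ← CohomologyClass.toHom_mk_eq_zero_iff]
    exact H _
  · intro H φ
    obtain ⟨x, rfl⟩ := CohomologyClass.homAddEquiv.surjective φ
    obtain ⟨x, rfl⟩ := x.mk_surjective
    obtain ⟨f, hf, rfl⟩ := Cocycle.fromSingleMk_surjective x q h (q + 1) rfl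
    rw [CohomologyClass.homAddEquiv_apply, CohomologyClass.toHom_mk_eq_zero_iff,
      Cocycle.fromSingleMk_mem_coboundaries_iff _ _ _ _ _ (q - 1) (by omega)]
    exact H f hf

end CochainComplex

lemma cAcyclic_iff (𝒞 : 𝒜 → Prop) (K : CochainComplex 𝒜 ℤ) :
    CAcyclic 𝒞 K ↔ ∀ (C : 𝒜), 𝒞 C → ∀ (n : ℤ)
      (f : (HomotopyCategory.singleFunctor 𝒜 0).obj C ⟶
        ((HomotopyCategory.quotient 𝒜 _).obj K)⟦n⟧), f = 0 := by
  refine forall₂_congr fun C _ => forall_congr' fun n => ?_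
  rw [CochainComplex.exactAt_mapHomologicalComplex_coyoneda_iff,
    ← CochainComplex.forall_quotient_single_hom_shift_eq_zero_iff C K (zero_add n)]
  exact ((HomotopyCategory.quotient 𝒜 _).commShiftIso n).app K |>.forall_eq_zero_iff_of_target

namespace HomotopyCategory

def cAcyclic (𝒞 : 𝒜 → Prop) : ObjectProperty (HomotopyCategory 𝒜 (ComplexShape.up ℤ)) :=
  fun X => CAcyclic 𝒞 X.as

lemma cAcyclic_eq_rightOrthogonal (𝒞 : 𝒜 → Prop) :
    cAcyclic 𝒞 =
      ((ObjectProperty.strictMap 𝒞 (singleFunctor 𝒜 0)).shiftClosure ℤ).rightOrthogonal := by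
  ext X
  rw [ObjectProperty.rightOrthogonal_shiftClosure_iff]
  exact (cAcyclic_iff 𝒞 X.as).trans ⟨fun h _ ⟨C, hC⟩ => h C hC, fun h C hC => h _ ⟨C, hC⟩⟩

instance (𝒞 : 𝒜 → Prop) : (cAcyclic 𝒞).IsTriangulated := by
  rw [cAcyclic_eq_rightOrthogonal]
  infer_instance

instance (𝒞 : 𝒜 → Prop) : (cAcyclic 𝒞).IsStableUnderRetracts := by
  rw [cAcyclic_eq_rightOrthogonal]
  infer_instance

end HomotopyCategory

/-- Let `𝒞` be a full additive subcategory of an abelian category `𝒜`.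
In the homotopy category `K(𝒜)`, the full subcategory of `𝒞`-acyclic complexes coincides
with the left orthogonal `^⊥𝒞 = {X• : Hom_{K(𝒜)}(C, X•[n]) = 0 for all n ∈ ℤ, C ∈ 𝒞}`
(where `C` is regarded as a stalk complex in degree `0`); in particular it is a thick
triangulated subcategory: it is closed under isomorphisms, shifts, extensions
(distinguished triangles) and direct summands. -/
theorem stmt_12 (𝒞 : 𝒜 → Prop) :
    -- the equality `K_{𝒞ac}(𝒜) = ^⊥𝒞` :
    (∀ X : HomotopyCategory 𝒜 (ComplexShape.up ℤ),
      CAcyclic 𝒞 X.as ↔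
        ∀ (C : 𝒜), 𝒞 C → ∀ (n : ℤ)
          (f : (HomotopyCategory.singleFunctor 𝒜 0).obj C ⟶ X⟦n⟧), f = 0) ∧
    -- thickness: closedness under isomorphisms, shifts, triangles and direct summands
    (∀ X Y : HomotopyCategory 𝒜 (ComplexShape.up ℤ),
      (X ≅ Y) → CAcyclic 𝒞 X.as → CAcyclic 𝒞 Y.as) ∧
    (∀ (X : HomotopyCategory 𝒜 (ComplexShape.up ℤ)) (n : ℤ),
      CAcyclic 𝒞 X.as → CAcyclic 𝒞 (X⟦n⟧).as) ∧
    (∀ T : Triangle (HomotopyCategory 𝒜 (ComplexShape.up ℤ)),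
      (T ∈ distTriang (HomotopyCategory 𝒜 (ComplexShape.up ℤ))) →
      CAcyclic 𝒞 T.obj₁.as → CAcyclic 𝒞 T.obj₂.as → CAcyclic 𝒞 T.obj₃.as) ∧
    (∀ X Y : CochainComplex 𝒜 ℤ, CAcyclic 𝒞 (X ⊞ Y) → CAcyclic 𝒞 X) := by
  let P := HomotopyCategory.cAcyclic 𝒞
  refine ⟨fun X => cAcyclic_iff 𝒞 X.as, fun _ _ e => P.prop_of_iso e,
    fun X n => P.le_shift n X, fun T hT => P.ext_of_isTriangulatedClosed₃ T hT,
    fun X Y => P.prop_of_retract ((BinaryBiproduct.bicone X Y).retract_left.map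
      (HomotopyCategory.quotient 𝒜 _))⟩
end

section
/- Let 𝒞 be a full additive subcategory of an abelian category 𝒜, let C• be an upper-bounded complex with terms in 𝒞, and let f•: X• → C• be a 𝒞-quasi-isomorphism (i.e., Hom_𝒜(C, f•) is a quasi-isomorphism for every C ∈ 𝒞). Then there is a chain map g•: C• → X• such that f• ∘ g• is homotopic to the identity on C•. Consequently, if X• also has all terms in 𝒞, then f• is a homotopy equivalence. -/
/-!
The mapping cone of a `𝒞`-quasi-isomorphism `f : X ⟶ C` becomes acyclic after applying
`Hom(Z, -)` for every `Z ∈ 𝒞`. As `C` is bounded above with terms in `𝒞`, a descending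
induction on the degree then makes the canonical map `C ⟶ cone f` null-homotopic, and the
distinguished triangle `X ⟶ C ⟶ cone f ⟶ X[1]` of the homotopy category yields a section `g`
of `f` up to homotopy. When `X` is also bounded above with terms in `𝒞`, `g` is again a
`𝒞`-quasi-isomorphism, so it has a section `g'` as well; then `g' ∼ f` and `f` is a homotopy
equivalence.
-/

open CategoryTheory CategoryTheory.Limits

universe v u

namespace HomologicalComplex

variable {V : Type*} [Category V] [Preadditive V] [CategoryWithHomology V]
  {ι : Type*} {c : ComplexShape ι}

lemma quasiIso_of_homotopy_comp_eq_id {K L : HomologicalComplex V c} (a : K ⟶ L) (b : L ⟶ K)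
    [QuasiIso b] (h : Homotopy (a ≫ b) (𝟙 K)) : QuasiIso a := by
  have : QuasiIso (a ≫ b) := ⟨fun n => by
    rw [quasiIsoAt_iff_isIso_homologyMap, h.homologyMap_eq, homologyMap_id]
    infer_instance⟩
  exact quasiIso_of_comp_right a b

end HomologicalComplex

namespace CochainComplex

variable {A : Type*} [Category A] [Abelian A]

lemma mappingCone_acyclic {K L : CochainComplex A ℤ} (φ : K ⟶ L) [QuasiIso φ] :
    (mappingCone φ).Acyclic := by
  have hφ : HomotopyCategory.quasiIso A (ComplexShape.up ℤ)
      ((HomotopyCategory.quotient _ _).map φ) := by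
    rw [HomotopyCategory.quotient_map_mem_quasiIso_iff, HomologicalComplex.mem_quasiIso_iff]
    infer_instance
  rw [HomotopyCategory.quasiIso_eq_trW_subcategoryAcyclic] at hφ
  rw [← HomotopyCategory.quotient_obj_mem_subcategoryAcyclic_iff_acyclic]
  have hT : mappingCone.triangleh φ ∈ distTriang (HomotopyCategory A (ComplexShape.up ℤ)) :=
    ⟨K, L, φ, ⟨Iso.refl _⟩⟩
  exact ((HomotopyCategory.subcategoryAcyclic A).trW_iff_of_distinguished _ hT).1 hφ

lemma exists_d_comp_eq_of_exactAt_preadditiveCoyoneda {K : CochainComplex A ℤ} {Z : A} {n : ℤ}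
    (hK : (((preadditiveCoyoneda.obj (Opposite.op Z)).mapHomologicalComplex
      (ComplexShape.up ℤ)).obj K).ExactAt n)
    (ψ : Z ⟶ K.X n) (hψ : ψ ≫ K.d n (n + 1) = 0) :
    ∃ h : Z ⟶ K.X (n - 1), h ≫ K.d (n - 1) n = ψ := by
  rw [HomologicalComplex.exactAt_iff' _ (n - 1) n (n + 1) (by simp) (by simp),
    ShortComplex.ab_exact_iff] at hK
  exact hK ψ hψ

section NullHomotopy

variable (C K : CochainComplex A ℤ) (b : ℤ) (hC : ∀ n : ℤ, b < n → IsZero (C.X n))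
  (hK : ∀ (n : ℤ) (ψ : C.X n ⟶ K.X n), ψ ≫ K.d n (n + 1) = 0 →
    ∃ h : C.X n ⟶ K.X (n - 1), h ≫ K.d (n - 1) n = ψ)
  (φ : C ⟶ K)

/- The components in degrees `n + 1` and `n` of a null-homotopy of `φ`, built by descending
induction from `b`. Keeping the degree `n + 1` component avoids transport along
`n + 1 - 1 = n` in the homotopy relation. -/
noncomputable def nullHomotopyData : ∀ n : ℤ,
    Σ' p : (C.X (n + 1) ⟶ K.X n) × (C.X n ⟶ K.X (n - 1)),
      p.2 ≫ K.d (n - 1) n = φ.f n - C.d n (n + 1) ≫ p.1 := fun n =>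
  if hn : b < n then ⟨(0, 0), by rw [(hC n hn).eq_of_src (φ.f n) 0]; simp⟩
  else
    let prev := nullHomotopyData (n + 1)
    let s : C.X (n + 1) ⟶ K.X n := prev.1.2 ≫ (K.XIsoOfEq (by omega)).hom
    have hs : s ≫ K.d n (n + 1) = φ.f (n + 1) - C.d (n + 1) (n + 1 + 1) ≫ prev.1.1 := by
      rw [← prev.2, Category.assoc, K.XIsoOfEq_hom_comp_d]
    have hcocycle : (φ.f n - C.d n (n + 1) ≫ s) ≫ K.d n (n + 1) = 0 := by
      rw [Preadditive.sub_comp, Category.assoc, hs, Preadditive.comp_sub, φ.comm n (n + 1)]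
      simp
    ⟨(s, (hK n _ hcocycle).choose), (hK n _ hcocycle).choose_spec⟩
termination_by n => (b + 1 - n).toNat
decreasing_by omega

lemma nullHomotopyData_fst (n : ℤ) (hn : ¬ b < n) :
    (nullHomotopyData C K b hC hK φ n).1.1 =
      (nullHomotopyData C K b hC hK φ (n + 1)).1.2 ≫ (K.XIsoOfEq (by omega)).hom := by
  rw [nullHomotopyData]
  simp [hn]

noncomputable def nullHomotopyOfBoundedAbove : Homotopy φ 0 where
  hom i j := if h : i - 1 = j then
    (nullHomotopyData C K b hC hK φ i).1.2 ≫ (K.XIsoOfEq h).hom else 0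
  zero i j h := dif_neg (by simp only [ComplexShape.up_Rel] at h; omega)
  comm i := by
    rw [dNext_eq _ (show (ComplexShape.up ℤ).Rel i (i + 1) by simp),
      prevD_eq _ (show (ComplexShape.up ℤ).Rel (i - 1) i by simp),
      dif_pos (show i + 1 - 1 = i by omega), dif_pos rfl]
    simp only [HomologicalComplex.XIsoOfEq_rfl, Iso.refl_hom, Category.comp_id,
      HomologicalComplex.zero_f, add_zero]
    by_cases hi : b < i
    · exact (hC i hi).eq_of_src _ _
    · rw [(nullHomotopyData C K b hC hK φ i).2, nullHomotopyData_fst C K b hC hK φ i hi]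
      abel

end NullHomotopy

lemma exists_homotopy_comp_eq_id_of_homotopy_inr_zero {X C : CochainComplex A ℤ} (f : X ⟶ C)
    (H : Homotopy (mappingCone.inr f) 0) :
    ∃ g : C ⟶ X, Nonempty (Homotopy (g ≫ f) (𝟙 C)) := by
  let Q := HomotopyCategory.quotient A (ComplexShape.up ℤ)
  have hT : mappingCone.triangleh f ∈ distTriang (HomotopyCategory A (ComplexShape.up ℤ)) :=
    ⟨X, C, f, ⟨Iso.refl _⟩⟩
  have hinr : 𝟙 (Q.obj C) ≫ Q.map (mappingCone.inr f) = 0 := by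
    rw [Category.id_comp, HomotopyCategory.eq_of_homotopy _ _ H, Functor.map_zero]
  obtain ⟨γ, hγ⟩ := Pretriangulated.Triangle.coyoneda_exact₂ _ hT _ hinr
  obtain ⟨g, rfl⟩ := Q.map_surjective γ
  exact ⟨g, ⟨HomotopyCategory.homotopyOfEq _ _
    (((Q.map_comp _ _).trans hγ.symm).trans (Q.map_id _).symm)⟩⟩

variable (𝒞 : A → Prop)

/-- A `𝒞`-quasi-isomorphism. -/
def IsHomQuasiIso {X Y : CochainComplex A ℤ} (f : X ⟶ Y) : Prop :=
  ∀ Z : A, 𝒞 Z → QuasiIso (((preadditiveCoyoneda.obj (Opposite.op Z)).mapHomologicalComplex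
    (ComplexShape.up ℤ)).map f)

variable {𝒞}

lemma IsHomQuasiIso.exists_homotopy_comp_eq_id {X C : CochainComplex A ℤ} {f : X ⟶ C}
    (hf : IsHomQuasiIso 𝒞 f) (hCbdd : ∃ b : ℤ, ∀ n : ℤ, b < n → IsZero (C.X n))
    (hCC : ∀ n : ℤ, 𝒞 (C.X n)) : ∃ g : C ⟶ X, Nonempty (Homotopy (g ≫ f) (𝟙 C)) := by
  obtain ⟨b, hb⟩ := hCbdd
  have hcone (n : ℤ) (ψ : C.X n ⟶ (mappingCone f).X n)
      (hψ : ψ ≫ (mappingCone f).d n (n + 1) = 0) :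
      ∃ h : C.X n ⟶ (mappingCone f).X (n - 1), h ≫ (mappingCone f).d (n - 1) n = ψ := by
    have := hf _ (hCC n)
    exact exists_d_comp_eq_of_exactAt_preadditiveCoyoneda
      (((mappingCone_acyclic _) n).of_iso (mappingCone.mapHomologicalComplexIso f _).symm) ψ hψ
  exact exists_homotopy_comp_eq_id_of_homotopy_inr_zero f
    (nullHomotopyOfBoundedAbove C _ b hb hcone _)

lemma IsHomQuasiIso.of_homotopy_comp_eq_id {X C : CochainComplex A ℤ}
    {f : X ⟶ C} {g : C ⟶ X} (hf : IsHomQuasiIso 𝒞 f) (h : Homotopy (g ≫ f) (𝟙 C)) :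
    IsHomQuasiIso 𝒞 g := by
  intro Z hZ
  have := hf Z hZ
  let F := (preadditiveCoyoneda.obj (Opposite.op Z)).mapHomologicalComplex (ComplexShape.up ℤ)
  refine HomologicalComplex.quasiIso_of_homotopy_comp_eq_id (F.map g) (F.map f) ?_
  rw [← F.map_comp, ← F.map_id]
  exact (preadditiveCoyoneda.obj (Opposite.op Z)).mapHomotopy h

end CochainComplex

/-- Let `𝒞` be a full additive subcategory of an abelian category `𝒜`, let
`C•` be an upper-bounded cochain complex with all terms in `𝒞`, and let `f : X• ⟶ C•` be a
`𝒞`-quasi-isomorphism, i.e. `Hom_𝒜(C, f)` is a quasi-isomorphism for every `C ∈ 𝒞`.  Then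
there is a chain map `g : C• ⟶ X•` with `f ∘ g` homotopic to the identity of `C•`.
Consequently, if `X•` is also an upper-bounded complex with all terms in `𝒞`, then `f` is a
homotopy equivalence. -/
theorem stmt_13 {𝒜 : Type u} [Category.{v} 𝒜] [Abelian 𝒜]
    (𝒞 : 𝒜 → Prop)
    (X C : CochainComplex 𝒜 ℤ)
    (hCbdd : ∃ b : ℤ, ∀ n : ℤ, b < n → IsZero (C.X n))
    (hCC : ∀ n : ℤ, 𝒞 (C.X n))
    (f : X ⟶ C)
    (hf : ∀ (Z : 𝒜), 𝒞 Z → QuasiIso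
      (((preadditiveCoyoneda.obj (Opposite.op Z)).mapHomologicalComplex
        (ComplexShape.up ℤ)).map f)) :
    (∃ g : C ⟶ X, Nonempty (Homotopy (g ≫ f) (𝟙 C))) ∧
    ((∃ b : ℤ, ∀ n : ℤ, b < n → IsZero (X.X n)) → (∀ n : ℤ, 𝒞 (X.X n)) →
      ∃ g : C ⟶ X, Nonempty (Homotopy (f ≫ g) (𝟙 X)) ∧ Nonempty (Homotopy (g ≫ f) (𝟙 C))) := by
  have hf : CochainComplex.IsHomQuasiIso 𝒞 f := hf
  obtain ⟨g, ⟨hgf⟩⟩ := hf.exists_homotopy_comp_eq_id hCbdd hCC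
  refine ⟨⟨g, ⟨hgf⟩⟩, fun hXbdd hXC => ?_⟩
  obtain ⟨g', ⟨hg'g⟩⟩ :=
    (hf.of_homotopy_comp_eq_id hgf).exists_homotopy_comp_eq_id hXbdd hXC
  let Q := HomotopyCategory.quotient 𝒜 (ComplexShape.up ℤ)
  have e₁ : Q.map g ≫ Q.map f = 𝟙 _ := by
    rw [← Q.map_comp, HomotopyCategory.eq_of_homotopy _ _ hgf, Q.map_id]
  have e₂ : Q.map g' ≫ Q.map g = 𝟙 _ := by
    rw [← Q.map_comp, HomotopyCategory.eq_of_homotopy _ _ hg'g, Q.map_id]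
  have hg'f : Q.map g' = Q.map f := by
    rw [← Category.comp_id (Q.map g'), ← e₁, ← Category.assoc, e₂, Category.id_comp]
  refine ⟨g, ⟨HomotopyCategory.homotopyOfEq _ _ ?_⟩, ⟨hgf⟩⟩
  rw [Q.map_comp, Q.map_id, ← hg'f, e₂]
end
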